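/- For α > 1 and a non-degenerate real random variable X with E[|X|^{2α}] < ∞, the quantity Var(|X-s|^α) - 2Cov(|X-s|^α, |X-X'|^α) tends to infinity as s → ∞, where X' is an independent copy of X. -/

import Mathlib

open MeasureTheory ProbabilityTheory Filter

-- helper: rpow triangle-type bound
lemma aux_rpow_bound (x y p : ℝ) (hp : 0 ≤ p) :
    |x - y| ^ p ≤ 2 ^ p * (|x| ^ p + |y| ^ p) := by
  have h1 : |x - y| ≤ 2 * max |x| |y| := by
    calc |x - y| ≤ |x| + |y| := abs_sub _ _
    _ ≤ 2 * max |x| |y| := by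
      rcases le_total |x| |y| with h | h <;> simp [max_eq_right, max_eq_left, h] <;> nlinarith [abs_nonneg x, abs_nonneg y]
  calc |x - y| ^ p ≤ (2 * max |x| |y|) ^ p :=
        Real.rpow_le_rpow (abs_nonneg _) h1 hp
    _ = 2 ^ p * (max |x| |y|) ^ p := Real.mul_rpow (by norm_num) (le_max_of_le_left (abs_nonneg _))
    _ ≤ 2 ^ p * (|x| ^ p + |y| ^ p) := by
        gcongr 2 ^ p * ?_
        rcases max_cases |x| |y| with ⟨h, _⟩ | ⟨h, _⟩ <;> rw [h]
        · exact le_add_of_nonneg_right (Real.rpow_nonneg (abs_nonneg _) _)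
        · exact le_add_of_nonneg_left (Real.rpow_nonneg (abs_nonneg _) _)

-- helper: nondegenerate gives two separated masses
lemma aux_split (μ : Measure ℝ) [IsProbabilityMeasure μ]
    (hnd : ¬ ∃ c : ℝ, ∀ᵐ x ∂μ, x = c) :
    ∃ a b : ℝ, a < b ∧ 0 < μ (Set.Iic a) ∧ 0 < μ (Set.Ici b) := by
  by_contra h
  push_neg at h
  -- S = lower-mass points, nonempty
  have hS : ∃ a : ℝ, 0 < μ (Set.Iic a) := by
    by_contra hS
    push_neg at hS
    have : μ (⋃ n : ℕ, Set.Iic (n : ℝ)) = 0 :=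
      measure_iUnion_null fun n => le_antisymm (hS n) zero_le
    have huniv : (⋃ n : ℕ, Set.Iic (n : ℝ)) = Set.univ := by
      ext x; simp only [Set.mem_iUnion, Set.mem_Iic, Set.mem_univ, iff_true]
      obtain ⟨n, hn⟩ := exists_nat_ge x; exact ⟨n, hn⟩
    rw [huniv] at this; simp at this
  have hT : ∃ b : ℝ, 0 < μ (Set.Ici b) := by
    by_contra hT
    push_neg at hT
    have : μ (⋃ n : ℕ, Set.Ici (-(n : ℝ))) = 0 :=
      measure_iUnion_null fun n => le_antisymm (hT _) zero_le
    have huniv : (⋃ n : ℕ, Set.Ici (-(n : ℝ))) = Set.univ := by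
      ext x; simp only [Set.mem_iUnion, Set.mem_Ici, Set.mem_univ, iff_true]
      obtain ⟨n, hn⟩ := exists_nat_ge (-x); exact ⟨n, by linarith⟩
    rw [huniv] at this; simp at this
  obtain ⟨b₀, hb₀⟩ := hT
  -- every lower-mass point is ≥ every upper-mass point
  have hle : ∀ a, 0 < μ (Set.Iic a) → ∀ b, 0 < μ (Set.Ici b) → b ≤ a := by
    intro a ha b hb
    by_contra hab
    push_neg at hab
    exact hb.not_ge (h a b hab ha)
  apply hnd
  have hSne : Set.Nonempty {a : ℝ | 0 < μ (Set.Iic a)} := hS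
  have hSbd : BddBelow {a : ℝ | 0 < μ (Set.Iic a)} :=
    ⟨b₀, fun a ha => hle a ha b₀ hb₀⟩
  set c := sInf {a : ℝ | 0 < μ (Set.Iic a)} with hc
  have hlo : μ (Set.Iio c) = 0 := by
    have hsub : Set.Iio c ⊆ ⋃ n : ℕ, Set.Iic (c - 1/(n+1)) := by
      intro x hx
      simp only [Set.mem_Iio] at hx
      obtain ⟨n, hn⟩ := exists_nat_one_div_lt (sub_pos.mpr hx)
      simp only [Set.mem_iUnion, Set.mem_Iic]
      exact ⟨n, by push_cast at hn ⊢; linarith⟩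
    refine measure_mono_null hsub (measure_iUnion_null fun n => ?_)
    by_contra hpos
    have h0 : 0 < μ (Set.Iic (c - 1/(n+1))) := pos_iff_ne_zero.mpr hpos
    have := csInf_le hSbd h0
    have hpos' : (0:ℝ) < 1/(n+1) := by positivity
    rw [← hc] at this
    linarith
  have hhi : μ (Set.Ioi c) = 0 := by
    have hsub : Set.Ioi c ⊆ ⋃ n : ℕ, Set.Ici (c + 1/(n+1)) := by
      intro x hx
      simp only [Set.mem_Ioi] at hx
      obtain ⟨n, hn⟩ := exists_nat_one_div_lt (sub_pos.mpr hx)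
      simp only [Set.mem_iUnion, Set.mem_Ici]
      exact ⟨n, by push_cast at hn ⊢; linarith⟩
    refine measure_mono_null hsub (measure_iUnion_null fun n => ?_)
    by_contra hpos
    have h0 : 0 < μ (Set.Ici (c + 1/(n+1))) := pos_iff_ne_zero.mpr hpos
    have hlb : c + 1/(n+1) ≤ c := by
      rw [hc]
      exact le_csInf hSne fun a ha => hle a ha _ h0
    have hpos' : (0:ℝ) < 1/(n+1) := by positivity
    linarith
  refine ⟨c, ?_⟩
  rw [ae_iff]
  refine measure_mono_null (fun x hx => ?_) (measure_union_null hlo hhi)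
  exact (lt_or_gt_of_ne hx).imp id id


-- helper: variance lower bound from two separated plateaus
lemma aux_var_lb {Ω : Type*} [MeasurableSpace Ω] (μ : Measure Ω) [IsProbabilityMeasure μ]
    (f : Ω → ℝ) (hf : MemLp f 2 μ) (A B : Set Ω) (hA : MeasurableSet A) (hB : MeasurableSet B)
    (u v : ℝ) (huv : v ≤ u)
    (hu : ∀ x ∈ A, u ≤ f x) (hv : ∀ x ∈ B, f x ≤ v) :
    min (μ A).toReal (μ B).toReal * ((u - v)/2)^2 ≤ variance f μ := by
  set M := ∫ x, f x ∂μ with hM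
  have hvar : variance f μ = ∫ x, (f x - M)^2 ∂μ := by
    rw [variance_eq_integral hf.aemeasurable]
  have hint : Integrable (fun x => (f x - M)^2) μ := by
    simpa using (hf.sub (memLp_const M)).integrable_sq
  have hnn : 0 ≤ᵐ[μ] fun x => (f x - M)^2 := ae_of_all _ fun x => sq_nonneg _
  have hc : (0:ℝ) ≤ ((u - v)/2)^2 := sq_nonneg _
  rcases le_total M ((u+v)/2) with hM' | hM'
  · have hAle : ((u - v)/2)^2 * (μ A).toReal ≤ ∫ x in A, (f x - M)^2 ∂μ := by
      apply setIntegral_ge_of_const_le_real hA (measure_ne_top μ A)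
      · intro x hx
        have h1 : (u - v)/2 ≤ f x - M := by have := hu x hx; linarith
        have h2 : (0:ℝ) ≤ (u-v)/2 := by linarith
        exact pow_le_pow_left₀ h2 h1 2
      · exact hint.integrableOn
    calc min (μ A).toReal (μ B).toReal * ((u - v)/2)^2
        ≤ (μ A).toReal * ((u - v)/2)^2 := by gcongr; exact min_le_left _ _
      _ = ((u - v)/2)^2 * (μ A).toReal := mul_comm _ _
      _ ≤ ∫ x in A, (f x - M)^2 ∂μ := hAle
      _ ≤ ∫ x, (f x - M)^2 ∂μ := setIntegral_le_integral hint hnn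
      _ = variance f μ := hvar.symm
  · have hBle : ((u - v)/2)^2 * (μ B).toReal ≤ ∫ x in B, (f x - M)^2 ∂μ := by
      apply setIntegral_ge_of_const_le_real hB (measure_ne_top μ B)
      · intro x hx
        have h1 : (u - v)/2 ≤ M - f x := by have := hv x hx; linarith
        have h2 : (0:ℝ) ≤ (u-v)/2 := by linarith
        calc ((u - v)/2)^2 ≤ (M - f x)^2 := pow_le_pow_left₀ h2 h1 2
          _ = (f x - M)^2 := by ring
      · exact hint.integrableOn
    calc min (μ A).toReal (μ B).toReal * ((u - v)/2)^2
        ≤ (μ B).toReal * ((u - v)/2)^2 := by gcongr; exact min_le_right _ _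
      _ = ((u - v)/2)^2 * (μ B).toReal := mul_comm _ _
      _ ≤ ∫ x in B, (f x - M)^2 ∂μ := hBle
      _ ≤ ∫ x, (f x - M)^2 ∂μ := setIntegral_le_integral hint hnn
      _ = variance f μ := hvar.symm

-- helper: covariance upper bound via Young's inequality
lemma aux_cov_bound {Ω : Type*} [MeasurableSpace Ω] (ν : Measure Ω) [IsProbabilityMeasure ν]
    (F G : Ω → ℝ) (hF : MemLp F 2 ν) (hG : MemLp G 2 ν) :
    (∫ x, F x * G x ∂ν) - (∫ x, F x ∂ν) * (∫ x, G x ∂ν) ≤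
      (1/4) * variance F ν + variance G ν := by
  set EF := ∫ x, F x ∂ν with hEF
  set EG := ∫ x, G x ∂ν with hEG
  have hFint : Integrable F ν := hF.integrable one_le_two
  have hGint : Integrable G ν := hG.integrable one_le_two
  have hF' : MemLp (fun x => F x - EF) 2 ν := by exact hF.sub (memLp_const EF)
  have hG' : MemLp (fun x => G x - EG) 2 ν := by exact hG.sub (memLp_const EG)
  have hF'sq : Integrable (fun x => (F x - EF)^2) ν := by simpa using hF'.integrable_sq
  have hG'sq : Integrable (fun x => (G x - EG)^2) ν := by simpa using hG'.integrable_sq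
  have h1 : Integrable (fun x => (F x - EF) * (G x - EG)) ν := by
    refine Integrable.mono' ((hF'sq.add hG'sq).div_const 2) (hF'.aestronglyMeasurable.mul
      hG'.aestronglyMeasurable) (ae_of_all _ fun x => ?_)
    rw [Real.norm_eq_abs, abs_mul]
    have := sq_nonneg (|F x - EF| - |G x - EG|)
    have h2 := sq_abs (F x - EF)
    have h3 := sq_abs (G x - EG)
    simp only [Pi.add_apply]
    nlinarith [abs_nonneg (F x - EF), abs_nonneg (G x - EG)]
  have hkey : (∫ x, F x * G x ∂ν) - EF * EG = ∫ x, (F x - EF) * (G x - EG) ∂ν := by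
    have hrw : (fun x => F x * G x) =
        fun x => (F x - EF) * (G x - EG) + (EG * F x + (EF * G x + (-(EF*EG)))) := by
      funext x; ring
    have e1 : ∫ x, ((F x - EF) * (G x - EG) + (EG * F x + (EF * G x + (-(EF*EG))))) ∂ν
        = (∫ x, (F x - EF) * (G x - EG) ∂ν) + ∫ x, (EG * F x + (EF * G x + (-(EF*EG)))) ∂ν :=
      integral_add h1 ((hFint.const_mul EG).add ((hGint.const_mul EF).add (integrable_const _)))
    have e2 : ∫ x, (EG * F x + (EF * G x + (-(EF*EG)))) ∂ν
        = (∫ x, EG * F x ∂ν) + ∫ x, (EF * G x + (-(EF*EG))) ∂ν :=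
      integral_add (hFint.const_mul EG) ((hGint.const_mul EF).add (integrable_const _))
    have e3 : ∫ x, (EF * G x + (-(EF*EG))) ∂ν
        = (∫ x, EF * G x ∂ν) + ∫ x, (-(EF*EG) : ℝ) ∂ν :=
      integral_add (hGint.const_mul EF) (integrable_const _)
    rw [hrw, e1, e2, e3, integral_const_mul, integral_const_mul, integral_const]
    simp only [measureReal_def, measure_univ, ENNReal.toReal_one, one_smul, ← hEF, ← hEG]
    ring
  have hmono : ∫ x, (F x - EF) * (G x - EG) ∂ν ≤
      ∫ x, ((1/4) * (F x - EF)^2 + (G x - EG)^2) ∂ν := by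
    refine integral_mono h1 ((hF'sq.const_mul _).add hG'sq) fun x => ?_
    nlinarith [sq_nonneg ((F x - EF)/2 - (G x - EG))]
  have hvF : variance F ν = ∫ x, (F x - EF)^2 ∂ν := by rw [variance_eq_integral hF.aemeasurable]
  have hvG : variance G ν = ∫ x, (G x - EG)^2 ∂ν := by rw [variance_eq_integral hG.aemeasurable]
  rw [hvF, hvG]
  rw [integral_add (hF'sq.const_mul _) hG'sq, integral_const_mul] at hmono
  linarith [hkey]

lemma aux_memL2 (μ : Measure ℝ) [IsProbabilityMeasure μ] (α : ℝ) (hα : 1 < α)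
    (hmom : Integrable (fun x => |x| ^ (2 * α)) μ) (s : ℝ) :
    MemLp (fun x => |x - s| ^ α) 2 μ := by
  have hcont : Continuous fun x : ℝ => |x - s| ^ α :=
    ((continuous_id.sub continuous_const).abs).rpow_const fun x => Or.inr (by linarith)
  rw [memLp_two_iff_integrable_sq hcont.aestronglyMeasurable]
  have heq : ∀ x : ℝ, (|x - s| ^ α) ^ 2 = |x - s| ^ (2 * α) := by
    intro x
    rw [← Real.rpow_natCast (|x - s| ^ α) 2, ← Real.rpow_mul (abs_nonneg _)]
    norm_num [mul_comm]
  refine Integrable.mono' (((hmom.add (integrable_const (|s| ^ (2 * α)))).const_mul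
    (2 ^ (2 * α)))) (hcont.pow 2).aestronglyMeasurable (ae_of_all _ fun x => ?_)
  rw [Real.norm_eq_abs, abs_of_nonneg (sq_nonneg _), heq x]
  exact aux_rpow_bound x s (2 * α) (by linarith)

lemma aux_memL2_fst (μ : Measure ℝ) [IsProbabilityMeasure μ] (α : ℝ) (hα : 1 < α)
    (hmom : Integrable (fun x => |x| ^ (2 * α)) μ) (s : ℝ) :
    MemLp (fun p : ℝ × ℝ => |p.1 - s| ^ α) 2 (μ.prod μ) := by
  have hcont : Continuous fun p : ℝ × ℝ => |p.1 - s| ^ α :=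
    ((continuous_fst.sub continuous_const).abs).rpow_const fun x => Or.inr (by linarith)
  rw [memLp_two_iff_integrable_sq hcont.aestronglyMeasurable]
  have heq : ∀ x : ℝ, (|x - s| ^ α) ^ 2 = |x - s| ^ (2 * α) := by
    intro x
    rw [← Real.rpow_natCast (|x - s| ^ α) 2, ← Real.rpow_mul (abs_nonneg _)]
    norm_num [mul_comm]
  have hi1 : Integrable (fun p : ℝ × ℝ => |p.1| ^ (2 * α)) (μ.prod μ) := by
    simpa using hmom.mul_prod (integrable_const (1 : ℝ))
  refine Integrable.mono' (((hi1.add (integrable_const (|s| ^ (2 * α)))).const_mul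
    (2 ^ (2 * α)))) (hcont.pow 2).aestronglyMeasurable (ae_of_all _ fun p => ?_)
  rw [Real.norm_eq_abs, abs_of_nonneg (sq_nonneg _), heq p.1]
  exact aux_rpow_bound p.1 s (2 * α) (by linarith)

lemma aux_memL2_G (μ : Measure ℝ) [IsProbabilityMeasure μ] (α : ℝ) (hα : 1 < α)
    (hmom : Integrable (fun x => |x| ^ (2 * α)) μ) :
    MemLp (fun p : ℝ × ℝ => |p.1 - p.2| ^ α) 2 (μ.prod μ) := by
  have hcont : Continuous fun p : ℝ × ℝ => |p.1 - p.2| ^ α :=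
    ((continuous_fst.sub continuous_snd).abs).rpow_const fun x => Or.inr (by linarith)
  rw [memLp_two_iff_integrable_sq hcont.aestronglyMeasurable]
  have heq : ∀ x : ℝ, (|x| ^ α) ^ 2 = |x| ^ (2 * α) := by
    intro x
    rw [← Real.rpow_natCast (|x| ^ α) 2, ← Real.rpow_mul (abs_nonneg _)]
    norm_num [mul_comm]
  have hi1 : Integrable (fun p : ℝ × ℝ => |p.1| ^ (2 * α)) (μ.prod μ) := by
    simpa using hmom.mul_prod (integrable_const (1 : ℝ))
  have hi2 : Integrable (fun p : ℝ × ℝ => |p.2| ^ (2 * α)) (μ.prod μ) := by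
    simpa using (integrable_const (1 : ℝ)).mul_prod hmom
  refine Integrable.mono' (((hi1.add hi2).const_mul (2 ^ (2 * α))))
    (hcont.pow 2).aestronglyMeasurable (ae_of_all _ fun p => ?_)
  rw [Real.norm_eq_abs, abs_of_nonneg (sq_nonneg _), heq (p.1 - p.2)]
  exact aux_rpow_bound p.1 p.2 (2 * α) (by linarith)

lemma aux_int_fst (μ : Measure ℝ) [IsProbabilityMeasure μ] (h : ℝ → ℝ) :
    ∫ p : ℝ × ℝ, h p.1 ∂(μ.prod μ) = ∫ x, h x ∂μ := by
  simpa using integral_prod_mul (μ := μ) (ν := μ) h (fun _ => (1 : ℝ))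

lemma aux_var_fst (μ : Measure ℝ) [IsProbabilityMeasure μ] (f : ℝ → ℝ)
    (hf : MemLp f 2 μ) (hF : MemLp (fun p : ℝ × ℝ => f p.1) 2 (μ.prod μ)) :
    variance (fun p : ℝ × ℝ => f p.1) (μ.prod μ) = variance f μ := by
  rw [variance_eq_sub hF, variance_eq_sub hf]
  simp only [Pi.pow_apply]
  rw [aux_int_fst μ (fun x => f x ^ 2), aux_int_fst μ f]

/-- For `α > 1` and non-degenerate `X` with finite `2α`-moment,
`Var(|X-s|^α) - 2 Cov(|X-s|^α, |X-X'|^α) → ∞` as `s → ∞`,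
where `X'` is an independent copy of `X` (covariance written out over the
product measure). -/
theorem stmt7 (μ : Measure ℝ) [IsProbabilityMeasure μ]
    (α : ℝ) (hα : 1 < α)
    (hmom : Integrable (fun x => |x| ^ (2 * α)) μ)
    (hnd : ¬ ∃ c : ℝ, ∀ᵐ x ∂μ, x = c) :
    Tendsto (fun s : ℝ =>
        variance (fun x => |x - s| ^ α) μ
          - 2 * ((∫ p, |p.1 - s| ^ α * |p.1 - p.2| ^ α ∂(μ.prod μ))
              - (∫ x, |x - s| ^ α ∂μ) * (∫ p, |p.1 - p.2| ^ α ∂(μ.prod μ))))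
      atTop atTop := by
  have hα0 : (0 : ℝ) < α := by linarith
  obtain ⟨a, b, hab, hA, hB⟩ := aux_split μ hnd
  -- choose R with positive mass on [b, R]
  obtain ⟨R, hQ⟩ : ∃ R : ℝ, 0 < μ (Set.Icc b R) := by
    by_contra hR
    push_neg at hR
    have h0 : μ (⋃ n : ℕ, Set.Icc b (b + n)) = 0 :=
      measure_iUnion_null fun n => le_antisymm (hR _) zero_le
    have hsub : Set.Ici b ⊆ ⋃ n : ℕ, Set.Icc b (b + n) := by
      intro x hx
      simp only [Set.mem_Ici] at hx
      obtain ⟨n, hn⟩ := exists_nat_ge (x - b)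
      simp only [Set.mem_iUnion, Set.mem_Icc]
      exact ⟨n, hx, by linarith⟩
    exact hB.ne' (measure_mono_null hsub h0)
  set p := (μ (Set.Iic a)).toReal with hp_def
  set q := (μ (Set.Icc b R)).toReal with hq_def
  have hp : 0 < p := ENNReal.toReal_pos hA.ne' (measure_ne_top μ _)
  have hq : 0 < q := ENNReal.toReal_pos hQ.ne' (measure_ne_top μ _)
  have hc : 0 < min p q := lt_min hp hq
  -- MemLp facts
  have hf2 : ∀ s : ℝ, MemLp (fun x => |x - s| ^ α) 2 μ := aux_memL2 μ α hα hmom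
  have hF2 : ∀ s : ℝ, MemLp (fun p : ℝ × ℝ => |p.1 - s| ^ α) 2 (μ.prod μ) :=
    aux_memL2_fst μ α hα hmom
  have hG2 : MemLp (fun p : ℝ × ℝ => |p.1 - p.2| ^ α) 2 (μ.prod μ) := aux_memL2_G μ α hα hmom
  set C₀ := variance (fun p : ℝ × ℝ => |p.1 - p.2| ^ α) (μ.prod μ) with hC₀
  -- lower bound of the expression
  have hlow : ∀ s : ℝ,
      (1/2) * variance (fun x => |x - s| ^ α) μ - 2 * C₀ ≤
        variance (fun x => |x - s| ^ α) μ
          - 2 * ((∫ p, |p.1 - s| ^ α * |p.1 - p.2| ^ α ∂(μ.prod μ))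
              - (∫ x, |x - s| ^ α ∂μ) * (∫ p, |p.1 - p.2| ^ α ∂(μ.prod μ))) := by
    intro s
    have hcov := aux_cov_bound (μ.prod μ) (fun p : ℝ × ℝ => |p.1 - s| ^ α)
      (fun p : ℝ × ℝ => |p.1 - p.2| ^ α) (hF2 s) hG2
    rw [aux_var_fst μ (fun x => |x - s| ^ α) (hf2 s) (hF2 s)] at hcov
    rw [← aux_int_fst μ (fun x => |x - s| ^ α)]
    linarith
  -- variance tends to infinity
  have hvartop : Tendsto (fun s : ℝ => variance (fun x => |x - s| ^ α) μ) atTop atTop := by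
    rw [tendsto_atTop]
    intro K
    have t1 : Tendsto (fun s : ℝ => s - b) atTop atTop :=
      tendsto_atTop_add_const_right _ _ tendsto_id
    have t2 : Tendsto (fun s : ℝ => (s - b) ^ (α - 1)) atTop atTop :=
      (tendsto_rpow_atTop (by linarith)).comp t1
    have t3 : Tendsto (fun s : ℝ => (s - b) ^ (α - 1) * (b - a)) atTop atTop :=
      t2.atTop_mul_const (by linarith)
    have t4 : Tendsto (fun s : ℝ => ((s - b) ^ (α - 1) * (b - a)) / 2) atTop atTop :=
      t3.atTop_div_const (by norm_num)
    have t5 : Tendsto (fun s : ℝ => (((s - b) ^ (α - 1) * (b - a)) / 2) ^ 2) atTop atTop :=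
      (tendsto_pow_atTop two_ne_zero).comp t4
    have t6 : Tendsto (fun s : ℝ => min p q * ((((s - b) ^ (α - 1) * (b - a)) / 2) ^ 2))
        atTop atTop := t5.const_mul_atTop hc
    filter_upwards [t6.eventually_ge_atTop K, eventually_ge_atTop (max R (b + 1))] with s hK hs
    have hsR : R ≤ s := le_trans (le_max_left _ _) hs
    have hsb : b + 1 ≤ s := le_trans (le_max_right _ _) hs
    set u := (s - a) ^ α with hu_def
    set v := (s - b) ^ α with hv_def
    have hsa : a ≤ s := by linarith
    have huv : v ≤ u := Real.rpow_le_rpow (by linarith) (by linarith) hα0.le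
    have hu : ∀ x ∈ Set.Iic a, u ≤ |x - s| ^ α := by
      intro x hx
      simp only [Set.mem_Iic] at hx
      have h1 : s - a ≤ |x - s| := by
        rw [abs_of_nonpos (by linarith)]; linarith
      exact Real.rpow_le_rpow (by linarith) h1 hα0.le
    have hv : ∀ x ∈ Set.Icc b R, |x - s| ^ α ≤ v := by
      intro x hx
      simp only [Set.mem_Icc] at hx
      have h1 : |x - s| ≤ s - b := by
        rw [abs_of_nonpos (by linarith)]; linarith
      exact Real.rpow_le_rpow (abs_nonneg _) h1 hα0.le
    have hvlb := aux_var_lb μ (fun x => |x - s| ^ α) (hf2 s) (Set.Iic a) (Set.Icc b R)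
      measurableSet_Iic measurableSet_Icc u v huv hu hv
    -- compare the explicit quantity with (u - v)
    have hb1 : (s - b) ^ (α - 1) * (b - a) ≤ u - v := by
      have e1 : u = (s - a) ^ (α - 1) * (s - a) := by
        have h := Real.rpow_add_one (by intro h; nlinarith [hab] : s - a ≠ 0) (α - 1)
        rw [sub_add_cancel] at h
        rw [hu_def, h]
      have e2 : v = (s - b) ^ (α - 1) * (s - b) := by
        have h := Real.rpow_add_one (by intro h; nlinarith [hsb] : s - b ≠ 0) (α - 1)
        rw [sub_add_cancel] at h
        rw [hv_def, h]
      have h3 : (s - b) ^ (α - 1) ≤ (s - a) ^ (α - 1) :=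
        Real.rpow_le_rpow (by linarith) (by linarith) (by linarith)
      have h4 : (0:ℝ) ≤ (s - b) ^ (α - 1) := Real.rpow_nonneg (by linarith) _
      rw [e1, e2]
      nlinarith
    have hb2 : (0:ℝ) ≤ (s - b) ^ (α - 1) * (b - a) :=
      mul_nonneg (Real.rpow_nonneg (by linarith) _) (by linarith)
    calc K ≤ min p q * ((((s - b) ^ (α - 1) * (b - a)) / 2) ^ 2) := hK
      _ ≤ min p q * (((u - v) / 2) ^ 2) :=
          mul_le_mul_of_nonneg_left
            (pow_le_pow_left₀ (by linarith) (by linarith) 2) hc.le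
      _ ≤ variance (fun x => |x - s| ^ α) μ := hvlb
  -- assemble
  have h2 : Tendsto (fun s : ℝ =>
      (1/2) * variance (fun x => |x - s| ^ α) μ - 2 * C₀) atTop atTop := by
    have := (hvartop.const_mul_atTop (by norm_num : (0:ℝ) < 1/2))
    simpa [sub_eq_add_neg] using tendsto_atTop_add_const_right atTop (-(2 * C₀)) this
  exact tendsto_atTop_mono hlow h2
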